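/- Let ð₀ > 0 and N ∈ ℕ. Then there exists a measurable function g : (0,∞) → [0,∞) with ∫₀^∞ g(r)·r dr < ∞ and ∫₀^∞ g(r)²·r dr < ∞ such that |ψ_ð^j(x)| ≤ g(x) for all x > 0, all j ∈ {0, …, N} and all ð ∈ [ð₀/2, 3ð₀/2]; i.e., the scaled Laguerre functions with parameters in a compact interval are uniformly dominated by a single function that is integrable and square-integrable with respect to r dr. -/

import Mathlib

open MeasureTheory

/-- The j-th Laguerre polynomial `L_j(t) = Σ_{k=0}^{j} ((−1)^k/k!)·C(j, j−k)·t^k`. -/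
noncomputable def laguerreP (j : ℕ) (t : ℝ) : ℝ :=
  ∑ k ∈ Finset.range (j + 1),
    ((-1 : ℝ) ^ k / (Nat.factorial k)) * (Nat.choose j (j - k)) * t ^ k

/-- The scaled Laguerre function `ψ_ð^j(r) = ð·exp(−πðr²/2)·L_j(πðr²)`. -/
noncomputable def psiL (dh : ℝ) (j : ℕ) (r : ℝ) : ℝ :=
  dh * Real.exp (-(Real.pi * dh * r ^ 2) / 2) * laguerreP j (Real.pi * dh * r ^ 2)

/-
The bound `|L_j(t)| ≤ Σ_k C(j,k) t^k / k! ≤ (1 + t)^j` for `t ≥ 0` gives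
`|ψ_ð^j(r)| ≤ ð (1 + πðr²)^j e^{-πðr²/2}`, which is monotone in `ð` apart from the Gaussian
factor. For `ð` in a compact subinterval of `(0,∞)` and `j ≤ N` it is therefore dominated by one
function `c (1 + a r²)^N e^{-b r²}` with `b > 0`, whose square has the same shape, and
`r^{2k+1} e^{-b r²}` is integrable on `(0,∞)`.
-/

theorem abs_laguerreP_le (j : ℕ) {t : ℝ} (ht : 0 ≤ t) : |laguerreP j t| ≤ (1 + t) ^ j := by
  calc |laguerreP j t|
      ≤ ∑ k ∈ Finset.range (j + 1),
          |((-1 : ℝ) ^ k / (Nat.factorial k)) * (Nat.choose j (j - k)) * t ^ k| :=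
        Finset.abs_sum_le_sum_abs _ _
    _ ≤ ∑ k ∈ Finset.range (j + 1), t ^ k * 1 ^ (j - k) * (Nat.choose j k) := by
        refine Finset.sum_le_sum fun k hk => ?_
        have hkj : k ≤ j := Nat.lt_succ_iff.mp (Finset.mem_range.mp hk)
        have hfact : (1 : ℝ) ≤ Nat.factorial k := by exact_mod_cast Nat.factorial_pos k
        rw [Nat.choose_symm hkj, abs_mul, abs_mul, abs_div, abs_pow, abs_neg, abs_one, one_pow,
          Nat.abs_cast, Nat.abs_cast, abs_pow, abs_of_nonneg ht, one_pow, mul_one, mul_comm (t ^ k)]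
        gcongr
        exact mul_le_of_le_one_left (Nat.cast_nonneg _) (div_le_one_of_le₀ hfact (by positivity))
    _ = (1 + t) ^ j := by rw [add_comm (1 : ℝ) t, add_pow]

noncomputable def gaussEnvelope (a b : ℝ) (n : ℕ) (x : ℝ) : ℝ :=
  (1 + a * x ^ 2) ^ n * Real.exp (-b * x ^ 2)

theorem measurable_gaussEnvelope (a b : ℝ) (n : ℕ) : Measurable (gaussEnvelope a b n) := by
  unfold gaussEnvelope
  fun_prop

theorem gaussEnvelope_nonneg {a : ℝ} (ha : 0 ≤ a) (b : ℝ) (n : ℕ) (x : ℝ) :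
    0 ≤ gaussEnvelope a b n x := by
  unfold gaussEnvelope
  positivity

theorem gaussEnvelope_sq (a b : ℝ) (n : ℕ) (x : ℝ) :
    gaussEnvelope a b n x ^ 2 = gaussEnvelope a (2 * b) (2 * n) x := by
  rw [gaussEnvelope, gaussEnvelope, mul_pow, ← pow_mul, ← Real.exp_nat_mul]
  congr 2 <;> push_cast <;> ring

theorem integrableOn_gaussEnvelope_mul_self (a : ℝ) {b : ℝ} (hb : 0 < b) (n : ℕ) :
    IntegrableOn (fun x => gaussEnvelope a b n x * x) (Set.Ioi 0) := by
  have hterms : IntegrableOn (fun x : ℝ => ∑ k ∈ Finset.range (n + 1),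
      a ^ k * (n.choose k : ℝ) * (x ^ ((2 * k + 1 : ℕ) : ℝ) * Real.exp (-b * x ^ 2)))
      (Set.Ioi 0) :=
    integrable_finsetSum _ fun k _ => (integrableOn_rpow_mul_exp_neg_mul_sq hb
      ((neg_lt_zero.mpr one_pos).trans_le (Nat.cast_nonneg _))).const_mul _
  refine hterms.congr_fun (fun x _ => ?_) measurableSet_Ioi
  rw [gaussEnvelope, add_comm (1 : ℝ), add_pow, Finset.sum_mul, Finset.sum_mul]
  refine Finset.sum_congr rfl fun k _ => ?_
  rw [Real.rpow_natCast]
  ring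

theorem abs_psiL_le_gaussEnvelope {d₁ d₂ dh : ℝ} (hd₁ : 0 ≤ d₁) (hdh : dh ∈ Set.Icc d₁ d₂)
    {j N : ℕ} (hj : j ≤ N) (x : ℝ) :
    |psiL dh j x| ≤ d₂ * gaussEnvelope (Real.pi * d₂) (Real.pi * d₁ / 2) N x := by
  obtain ⟨hd₁dh, hdhd₂⟩ := hdh
  have hdh : 0 ≤ dh := hd₁.trans hd₁dh
  have hd₂ : 0 ≤ d₂ := hdh.trans hdhd₂
  have ht : 0 ≤ Real.pi * dh * x ^ 2 := by positivity
  have hpoly : |laguerreP j (Real.pi * dh * x ^ 2)| ≤ (1 + Real.pi * d₂ * x ^ 2) ^ N :=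
    calc |laguerreP j (Real.pi * dh * x ^ 2)|
        ≤ (1 + Real.pi * dh * x ^ 2) ^ j := abs_laguerreP_le j ht
      _ ≤ (1 + Real.pi * dh * x ^ 2) ^ N := pow_le_pow_right₀ (by linarith) hj
      _ ≤ (1 + Real.pi * d₂ * x ^ 2) ^ N := by gcongr
  have hgauss : Real.exp (-(Real.pi * dh * x ^ 2) / 2) ≤ Real.exp (-(Real.pi * d₁ / 2) * x ^ 2) :=
    Real.exp_le_exp.mpr (by nlinarith [mul_le_mul_of_nonneg_left hd₁dh Real.pi_pos.le])
  rw [psiL, abs_mul, abs_mul, abs_of_nonneg hdh, abs_of_pos (Real.exp_pos _), gaussEnvelope]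
  calc dh * Real.exp (-(Real.pi * dh * x ^ 2) / 2) * |laguerreP j (Real.pi * dh * x ^ 2)|
      ≤ d₂ * Real.exp (-(Real.pi * d₁ / 2) * x ^ 2) * (1 + Real.pi * d₂ * x ^ 2) ^ N := by gcongr
    _ = _ := by ring

/-- For ð₀ > 0 and N ∈ ℕ, there is a single measurable dominating function g, integrable and
square-integrable for the measure r dr on (0,∞), with `|ψ_ð^j(x)| ≤ g(x)` for all x > 0,
all j ∈ {0,…,N} and all ð ∈ [ð₀/2, 3ð₀/2]. -/
theorem stmt15 (dh₀ : ℝ) (hdh₀ : 0 < dh₀) (N : ℕ) :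
    ∃ g : ℝ → ℝ, Measurable g ∧ (∀ x, 0 < x → 0 ≤ g x) ∧
      MeasureTheory.IntegrableOn (fun r => g r * r) (Set.Ioi 0) ∧
      MeasureTheory.IntegrableOn (fun r => g r ^ 2 * r) (Set.Ioi 0) ∧
      ∀ x > (0 : ℝ), ∀ j ≤ N, ∀ dh ∈ Set.Icc (dh₀ / 2) (3 * dh₀ / 2),
        |psiL dh j x| ≤ g x := by
  set c := 3 * dh₀ / 2
  set a := Real.pi * c
  set b := Real.pi * (dh₀ / 2) / 2
  have hb : 0 < b := by positivity
  refine ⟨fun x => c * gaussEnvelope a b N x, (measurable_gaussEnvelope a b N).const_mul c,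
    fun x _ => mul_nonneg (by positivity) (gaussEnvelope_nonneg (by positivity) b N x),
    ?_, ?_, fun x _ j hj dh hdh => abs_psiL_le_gaussEnvelope (by positivity) hdh hj x⟩
  · simp only [mul_assoc]
    exact (integrableOn_gaussEnvelope_mul_self a hb N).const_mul c
  · simp only [mul_pow, gaussEnvelope_sq, mul_assoc]
    exact (integrableOn_gaussEnvelope_mul_self a (by positivity) (2 * N)).const_mul (c ^ 2)
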